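/- arXiv:1212.5631 — 6 statements merged into one kernel-verified Lean document; each statement's English description precedes it below -/
import Mathlib

section
/- Let A be a dendriform algebra over a commutative ring R, and define the pre-Jordan product x · y = x ≻ y + y ≺ x and the symmetrized product x ∘ y = x · y + y · x. Then for all x, y, z, u in A the first pre-Jordan identity holds: (x ∘ y) · (z · u) + (y ∘ z) · (x · u) + (z ∘ x) · (y · u) = z · ((x ∘ y) · u) + x · ((y ∘ z) · u) + y · ((z ∘ x) · u). -/
/-- A pair of R-bilinear operations `p` (`≺`) and `s` (`≻`) on an R-module `A`
forms a dendriform algebra. -/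
def IsDendriform {R : Type*} [CommRing R] {A : Type*} [AddCommGroup A] [Module R A]
    (p s : A →ₗ[R] A →ₗ[R] A) : Prop :=
  (∀ x y z : A, p (p x y) z = p x (p y z) + p x (s y z)) ∧
  (∀ x y z : A, p (s x y) z = s x (p y z)) ∧
  (∀ x y z : A, s x (s y z) = s (p x y) z + s (s x y) z)

/-- The pre-Jordan product `x · y = x ≻ y + y ≺ x` in a dendriform algebra
satisfies the first pre-Jordan identity. -/
theorem preJordan_identity_one {R : Type*} [CommRing R] {A : Type*} [AddCommGroup A]
    [Module R A] (p s : A →ₗ[R] A →ₗ[R] A) (h : IsDendriform p s)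
    (mul circ : A → A → A)
    (hmul : ∀ x y : A, mul x y = s x y + p y x)
    (hcirc : ∀ x y : A, circ x y = mul x y + mul y x) :
    ∀ x y z u : A,
      mul (circ x y) (mul z u) + mul (circ y z) (mul x u) + mul (circ z x) (mul y u)
        = mul z (mul (circ x y) u) + mul x (mul (circ y z) u) + mul y (mul (circ z x) u) := by
  obtain ⟨h1, h2, h3⟩ := h
  intro x y z u
  simp only [hcirc, hmul, map_add, LinearMap.add_apply, h1, h2, h3]
  abel
end

section
/- Let A be a dendriform algebra over a commutative ring R, and define the pre-Jordan product x · y = x ≻ y + y ≺ x and the symmetrized product x ∘ y = x · y + y · x. Then for all x, y, z, u in A the second pre-Jordan identity holds: x · (y · (z · u)) + z · (y · (x · u)) + ((x ∘ z) ∘ y) · u = z · ((x ∘ y) · u) + x · ((y ∘ z) · u) + y · ((z ∘ x) · u). -/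
/-- The pre-Jordan product `x · y = x ≻ y + y ≺ x` in a dendriform algebra
satisfies the second pre-Jordan identity. -/
theorem preJordan_identity_two {R : Type*} [CommRing R] {A : Type*} [AddCommGroup A]
    [Module R A] (p s : A →ₗ[R] A →ₗ[R] A) (h : IsDendriform p s)
    (mul circ : A → A → A)
    (hmul : ∀ x y : A, mul x y = s x y + p y x)
    (hcirc : ∀ x y : A, circ x y = mul x y + mul y x) :
    ∀ x y z u : A,
      mul x (mul y (mul z u)) + mul z (mul y (mul x u)) + mul (circ (circ x z) y) u
        = mul z (mul (circ x y) u) + mul x (mul (circ y z) u) + mul y (mul (circ z x) u) := by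
  obtain ⟨h1, h2, h3⟩ := h
  intro x y z u
  simp only [hcirc, hmul, map_add, LinearMap.add_apply, h1, h2, h3]
  abel
end

section
/- Let A be a pre-Jordan algebra over a field of characteristic 0. Then the product x ∘ y = x · y + y · x is commutative and satisfies the Jordan identity: (x ∘ y) ∘ (x ∘ x) = x ∘ (y ∘ (x ∘ x)) for all x, y in A; that is, (A, ∘) is a Jordan algebra. -/
/-- The symmetrized product of the bilinear product `m` of a pre-Jordan algebra. -/
theorem preJordan_symmetrization_isJordan {F : Type*} [Field F] [CharZero F]
    {A : Type*} [AddCommGroup A] [Module F A]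
    (m : A →ₗ[F] A →ₗ[F] A) (circ : A → A → A)
    (hcirc : ∀ x y : A, circ x y = m x y + m y x)
    (PJ1 : ∀ x y z u : A,
      m (circ x y) (m z u) + m (circ y z) (m x u) + m (circ z x) (m y u)
        = m z (m (circ x y) u) + m x (m (circ y z) u) + m y (m (circ z x) u))
    (PJ2 : ∀ x y z u : A,
      m x (m y (m z u)) + m z (m y (m x u)) + m (circ (circ x z) y) u
        = m z (m (circ x y) u) + m x (m (circ y z) u) + m y (m (circ z x) u)) :
    (∀ x y : A, circ x y = circ y x) ∧
    (∀ x y : A, circ (circ x y) (circ x x) = circ x (circ y (circ x x))) := by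
  constructor
  · intro x y; rw [hcirc, hcirc]; abel
  · intro x y
    have h1 := PJ1 x x x y
    have h2 := PJ1 x x y x
    have h3 := PJ2 x y x x
    simp only [hcirc, map_add, LinearMap.add_apply] at h1 h2 h3 ⊢
    linear_combination (norm := module) (3⁻¹ : F) • h1 + h2 - h3
end

section
/- Let A be an associative algebra over a commutative ring R and let T : A → A be an R-linear map satisfying the Rota–Baxter relation of weight zero: T(x) T(y) = T(T(x) y + x T(y)) for all x, y in A. Define x ≺ y = x T(y) and x ≻ y = T(x) y. Then (A, ≺, ≻) is a dendriform algebra: for all x, y, z in A, (x ≺ y) ≺ z = x ≺ (y ≺ z) + x ≺ (y ≻ z); (x ≻ y) ≺ z = x ≻ (y ≺ z); x ≻ (y ≻ z) = (x ≺ y) ≻ z + (x ≻ y) ≻ z. -/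
/-- A Rota–Baxter operator of weight zero on an associative algebra induces a
dendriform algebra structure via `x ≺ y = x T(y)` and `x ≻ y = T(x) y`. -/
theorem rotaBaxter_gives_dendriform {R : Type*} [CommRing R] {A : Type*}
    [Ring A] [Algebra R A] (T : A →ₗ[R] A)
    (hT : ∀ x y : A, T x * T y = T (T x * y + x * T y))
    (p s : A → A → A)
    (hp : ∀ x y : A, p x y = x * T y)
    (hs : ∀ x y : A, s x y = T x * y) :
    (∀ x y z : A, p (p x y) z = p x (p y z) + p x (s y z)) ∧
    (∀ x y z : A, p (s x y) z = s x (p y z)) ∧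
    (∀ x y z : A, s x (s y z) = s (p x y) z + s (s x y) z) := by
  refine ⟨fun x y z => ?_, fun x y z => by simp [hp, hs, mul_assoc], fun x y z => ?_⟩
  · simp only [hp, hs, mul_assoc, ← mul_add, ← map_add]; rw [add_comm, ← hT]
  · simp only [hp, hs, ← mul_assoc, ← add_mul, ← map_add]; rw [add_comm, ← hT]
end

section
/- Let L be a Lie algebra over a commutative ring R and let T : L → L be an R-linear map satisfying the Rota–Baxter relation of weight zero: [T(x), T(y)] = T([T(x), y] + [x, T(y)]) for all x, y in L. Then the product x · y = [T(x), y] satisfies the pre-Lie identity: (x · y) · z − x · (y · z) = (y · x) · z − y · (x · z) for all x, y, z in L. -/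
/-- A Rota–Baxter operator of weight zero on a Lie algebra gives a pre-Lie
product `x · y = [T(x), y]`. -/
theorem rotaBaxter_lie_gives_preLie {R : Type*} [CommRing R] {L : Type*}
    [LieRing L] [LieAlgebra R L] (T : L →ₗ[R] L)
    (hT : ∀ x y : L, ⁅T x, T y⁆ = T (⁅T x, y⁆ + ⁅x, T y⁆))
    (m : L → L → L) (hm : ∀ x y : L, m x y = ⁅T x, y⁆) :
    ∀ x y z : L, m (m x y) z - m x (m y z) = m (m y x) z - m y (m x z) := by
  intro x y z
  have h : T ⁅T y, x⁆ = T ⁅T x, y⁆ - ⁅T x, T y⁆ := by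
    have h1 := hT x y
    have h2 : (⁅x, T y⁆ : L) = -⁅T y, x⁆ := by rw [lie_skew]
    rw [h2, map_add, map_neg] at h1
    rw [eq_sub_iff_add_eq]
    rw [h1]
    abel
  simp only [hm, h, sub_lie, lie_lie]
  abel
end

section
/- Let J be a vector space over a field of characteristic 0 with a commutative bilinear product ∘ satisfying the Jordan identity (x ∘ y) ∘ (x ∘ x) = x ∘ (y ∘ (x ∘ x)), and let T : J → J be a linear map satisfying T(x) ∘ T(y) = T(T(x) ∘ y + x ∘ T(y)) for all x, y in J. Then the product x · y = T(x) ∘ y makes J a pre-Jordan algebra: setting x • y = x · y + y · x, both identities PJ1: (x • y) · (z · u) + (y • z) · (x · u) + (z • x) · (y · u) = z · ((x • y) · u) + x · ((y • z) · u) + y · ((z • x) · u), and PJ2: x · (y · (z · u)) + z · (y · (x · u)) + ((x • z) • y) · u = z · ((x • y) · u) + x · ((y • z) · u) + y · ((z • x) · u), hold for all x, y, z, u in J. -/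
/-- A Rota–Baxter operator of weight zero on a Jordan algebra gives a
pre-Jordan algebra via `x · y = T(x) ∘ y`. -/
theorem rotaBaxter_jordan_gives_preJordan {F : Type*} [Field F] [CharZero F]
    {J : Type*} [AddCommGroup J] [Module F J]
    (j : J →ₗ[F] J →ₗ[F] J)
    (hcomm : ∀ x y : J, j x y = j y x)
    (hjordan : ∀ x y : J, j (j x y) (j x x) = j x (j y (j x x)))
    (T : J →ₗ[F] J)
    (hT : ∀ x y : J, j (T x) (T y) = T (j (T x) y + j x (T y)))
    (m bullet : J → J → J)
    (hm : ∀ x y : J, m x y = j (T x) y)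
    (hbullet : ∀ x y : J, bullet x y = m x y + m y x) :
    (∀ x y z u : J,
      m (bullet x y) (m z u) + m (bullet y z) (m x u) + m (bullet z x) (m y u)
        = m z (m (bullet x y) u) + m x (m (bullet y z) u) + m y (m (bullet z x) u)) ∧
    (∀ x y z u : J,
      m x (m y (m z u)) + m z (m y (m x u)) + m (bullet (bullet x z) y) u
        = m z (m (bullet x y) u) + m x (m (bullet y z) u) + m y (m (bullet z x) u)) := by
  -- linearized Jordan identity
  have lin : ∀ a b c u : J,
      j (j a u) (j b c) + j (j b u) (j a c) + j (j c u) (j a b)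
        = j a (j u (j b c)) + j b (j u (j a c)) + j c (j u (j a b)) := by
    intro a b c u
    have h1 := hjordan (a + b + c) u
    have h2 := hjordan (a + b) u
    have h3 := hjordan (a + c) u
    have h4 := hjordan (b + c) u
    have h5 := hjordan a u
    have h6 := hjordan b u
    have h7 := hjordan c u
    simp only [map_add, LinearMap.add_apply] at h1 h2 h3 h4 h5 h6 h7
    simp only [hcomm] at h1 h2 h3 h4 h5 h6 h7 ⊢
    linear_combination (norm := module)
      (2:F)⁻¹ • (h1 - h2 - h3 - h4 + h5 + h6 + h7)
  have hTb : ∀ p q : J, T (bullet p q) = j (T p) (T q) := by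
    intro p q
    rw [hbullet, hm, hm, hcomm (T q) p, ← hT]
  constructor
  · intro x y z u
    have A := lin (T x) (T y) (T z) u
    simp only [hm, hTb]
    simp only [hcomm] at A ⊢
    linear_combination (norm := module) A
  · intro x y z u
    have A1 := lin (T x) (T y) (T z) u
    have A2 := lin (T x) (T z) u (T y)
    simp only [hm, hTb]
    simp only [hcomm] at A1 A2 ⊢
    linear_combination (norm := module) A1 - A2
end
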